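/- The standard-normal function t ↦ φ(t)²/(Φ(t)(1−Φ(t))) satisfies φ(t)²/(Φ(t)(1−Φ(t))) ≤ 2/π for all t ∈ ℝ, with equality if and only if t = 0. -/

import Mathlib

open MeasureTheory Real Set Filter

noncomputable def npdf (t : ℝ) : ℝ := (Real.sqrt (2 * Real.pi))⁻¹ * Real.exp (-t ^ 2 / 2)

noncomputable def ncdf (t : ℝ) : ℝ := ∫ s in Set.Iic t, npdf s

lemma npdf_pos (t : ℝ) : 0 < npdf t := by
  unfold npdf
  positivity

lemma npdf_cont : Continuous npdf := by
  unfold npdf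
  continuity

lemma npdf_even (t : ℝ) : npdf (-t) = npdf t := by simp [npdf]

lemma integrable_npdf : Integrable npdf := by
  have h : Integrable (fun x : ℝ => Real.exp (-(1/2) * x ^ 2)) := integrable_exp_neg_mul_sq (by norm_num)
  have := h.const_mul (Real.sqrt (2 * Real.pi))⁻¹
  convert this using 2 with x
  unfold npdf
  ring_nf

lemma integral_npdf : ∫ x, npdf x = 1 := by
  have h : ∫ x : ℝ, Real.exp (-(1/2) * x ^ 2) = Real.sqrt (Real.pi / (1/2)) := integral_gaussian (1/2)
  unfold npdf
  rw [MeasureTheory.integral_const_mul]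
  have e : ∀ x : ℝ, Real.exp (-x ^ 2 / 2) = Real.exp (-(1/2) * x ^ 2) := by
    intro x; ring_nf
  simp_rw [e, h]
  rw [inv_mul_eq_one₀ (by positivity)]
  congr 1
  ring

lemma ncdf_add_Ioi (t : ℝ) : ncdf t + ∫ s in Set.Ioi t, npdf s = 1 := by
  rw [ncdf, intervalIntegral.integral_Iic_add_Ioi integrable_npdf.integrableOn
    integrable_npdf.integrableOn, integral_npdf]

lemma ncdf_neg (t : ℝ) : ncdf (-t) = 1 - ncdf t := by
  have : ncdf (-t) = ∫ s in Set.Ioi t, npdf s := by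
    rw [ncdf, ← integral_comp_neg_Ioi]
    simp_rw [npdf_even]
  rw [this]
  have := ncdf_add_Ioi t
  linarith

lemma ncdf_zero : ncdf 0 = 1/2 := by
  have := ncdf_neg 0
  rw [neg_zero] at this
  linarith

lemma ncdf_pos (t : ℝ) : 0 < ncdf t := by
  rw [ncdf]
  apply MeasureTheory.setIntegral_pos_iff_support_of_nonneg_ae ?_ integrable_npdf.integrableOn |>.2
  · have : Function.support npdf = Set.univ := by
      ext x; simp [Function.support, (npdf_pos x).ne']
    rw [this, Set.univ_inter]
    simp [Real.volume_Iic]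
  · filter_upwards with x using (npdf_pos x).le

lemma ncdf_lt_one (t : ℝ) : ncdf t < 1 := by
  have h := ncdf_neg (-t)
  rw [neg_neg] at h
  have := ncdf_pos (-t)
  linarith

lemma hasDerivAt_ncdf (t : ℝ) : HasDerivAt ncdf (npdf t) t := by
  have key : ∀ x : ℝ, ncdf x = ncdf 0 + ∫ s in (0:ℝ)..x, npdf s := by
    intro x
    rw [← intervalIntegral.integral_Iic_sub_Iic integrable_npdf.integrableOn
      integrable_npdf.integrableOn]
    rw [ncdf, ncdf]; ring
  have h1 : HasDerivAt (fun x => ∫ s in (0:ℝ)..x, npdf s) (npdf t) t :=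
    intervalIntegral.integral_hasDerivAt_right
      integrable_npdf.intervalIntegrable
      (npdf_cont.stronglyMeasurableAtFilter _ _)
      npdf_cont.continuousAt
  have := h1.const_add (ncdf 0)
  apply this.congr_of_eventuallyEq
  filter_upwards with x using (key x)

lemma tendsto_ncdf_atTop : Tendsto ncdf atTop (nhds 1) := by
  have h := (MeasureTheory.aecover_Iic (tendsto_id : Tendsto (id : ℝ → ℝ) atTop atTop)).integral_tendsto_of_countably_generated integrable_npdf
  rw [integral_npdf] at h
  exact h

lemma tendsto_npdf_atTop : Tendsto npdf atTop (nhds 0) := by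
  have h1 : Tendsto (fun t : ℝ => -t ^ 2 / 2) atTop atBot := by
    apply Filter.Tendsto.atBot_div_const (by norm_num)
    apply tendsto_neg_atBot_iff.2
    exact tendsto_pow_atTop (by norm_num)
  have h2 := Real.tendsto_exp_atBot.comp h1
  have := h2.const_mul (Real.sqrt (2 * Real.pi))⁻¹
  unfold npdf
  simpa only [Function.comp_def, mul_zero] using this

noncomputable def hfun (t : ℝ) : ℝ := 1 - 2 * ncdf t + Real.pi * t * npdf t

noncomputable def gfun (t : ℝ) : ℝ := ncdf t * (1 - ncdf t) - Real.pi / 2 * (npdf t) ^ 2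

lemma hasDerivAt_npdf (t : ℝ) : HasDerivAt npdf (-t * npdf t) t := by
  have h1 : HasDerivAt (fun t : ℝ => -t ^ 2 / 2) (-t) t := by
    have := ((hasDerivAt_pow 2 t).neg).div_const 2
    refine this.congr_deriv (Eq.symm ?_)
    simp; ring
  have h2 := (h1.exp).const_mul (Real.sqrt (2 * Real.pi))⁻¹
  refine h2.congr_deriv (Eq.symm ?_)
  unfold npdf; ring

lemma hasDerivAt_gfun (t : ℝ) : HasDerivAt gfun (npdf t * hfun t) t := by
  have hc := hasDerivAt_ncdf t
  have hp := hasDerivAt_npdf t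
  have h1 := hc.mul ((hasDerivAt_const t (1:ℝ)).sub hc)
  have h2 := ((hp.pow 2)).const_mul (Real.pi / 2)
  have := h1.sub h2
  refine this.congr_deriv (Eq.symm ?_)
  unfold hfun
  push_cast [Pi.sub_apply]
  ring

lemma hasDerivAt_hfun (t : ℝ) :
    HasDerivAt hfun (npdf t * (Real.pi - 2 - Real.pi * t ^ 2)) t := by
  have hc := hasDerivAt_ncdf t
  have hp := hasDerivAt_npdf t
  have h1 := ((hasDerivAt_const t (1:ℝ)).sub (hc.const_mul 2))
  have h2 := ((hasDerivAt_id t).const_mul Real.pi).mul hp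
  have := h1.add h2
  refine this.congr_deriv (Eq.symm ?_)
  simp only [id_eq]; ring

lemma hfun_zero : hfun 0 = 0 := by simp [hfun, ncdf_zero]

lemma npdf_zero_sq : (npdf 0) ^ 2 = (2 * Real.pi)⁻¹ := by
  have h : (0:ℝ) ≤ 2 * Real.pi := by positivity
  unfold npdf
  norm_num [inv_pow, mul_pow, Real.sq_sqrt h, Real.sq_sqrt Real.pi_pos.le, Real.sq_sqrt (by norm_num : (0:ℝ) ≤ 2)]

lemma gfun_zero : gfun 0 = 0 := by
  have hpi : Real.pi ≠ 0 := Real.pi_ne_zero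
  rw [gfun, ncdf_zero, npdf_zero_sq]
  field_simp
  ring

lemma gfun_even (t : ℝ) : gfun (-t) = gfun t := by
  rw [gfun, gfun, ncdf_neg, npdf_even]; ring

lemma tendsto_gfun_atTop : Tendsto gfun atTop (nhds 0) := by
  have h1 : Tendsto (fun t => ncdf t * (1 - ncdf t)) atTop (nhds (1 * (1 - 1))) :=
    tendsto_ncdf_atTop.mul ((tendsto_const_nhds (x := (1:ℝ))).sub tendsto_ncdf_atTop)
  have h2 : Tendsto (fun t => Real.pi / 2 * npdf t ^ 2) atTop (nhds (Real.pi / 2 * 0 ^ 2)) :=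
    (tendsto_npdf_atTop.pow 2).const_mul _
  have := h1.sub h2
  unfold gfun
  simpa using this

lemma pi_gt_two : (2:ℝ) < Real.pi := by linarith [Real.pi_gt_three]

lemma sub_two_div_pi_pos : 0 < 1 - 2 / Real.pi := by
  have hπ := Real.pi_pos
  rw [sub_pos, div_lt_one hπ]
  exact pi_gt_two

noncomputable def acrit : ℝ := Real.sqrt (1 - 2 / Real.pi)

lemma acrit_pos : 0 < acrit := Real.sqrt_pos.2 sub_two_div_pi_pos

lemma acrit_sq : acrit ^ 2 = 1 - 2 / Real.pi := Real.sq_sqrt sub_two_div_pi_pos.le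

lemma hfun_cont : Continuous hfun :=
  (Differentiable.continuous fun t => (hasDerivAt_hfun t).differentiableAt)

lemma gfun_cont : Continuous gfun :=
  (Differentiable.continuous fun t => (hasDerivAt_gfun t).differentiableAt)

lemma pi_mul_two_div : Real.pi * (2 / Real.pi) = 2 :=
  mul_div_cancel₀ 2 Real.pi_ne_zero

lemma hfun_pos : ∀ t ∈ Set.Ioc 0 acrit, 0 < hfun t := by
  have hmono : StrictMonoOn hfun (Set.Icc 0 acrit) := by
    apply strictMonoOn_of_deriv_pos (convex_Icc _ _) hfun_cont.continuousOn
    intro t ht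
    rw [interior_Icc] at ht
    rw [(hasDerivAt_hfun t).deriv]
    apply mul_pos (npdf_pos t)
    have h1 : t ^ 2 < acrit ^ 2 := by nlinarith [ht.1, ht.2, acrit_pos]
    rw [acrit_sq] at h1
    have hπ := Real.pi_pos
    nlinarith [pi_mul_two_div]
  intro t ht
  have := hmono (Set.left_mem_Icc.2 acrit_pos.le) ⟨ht.1.le, ht.2⟩ ht.1
  rwa [hfun_zero] at this

lemma hfun_anti : StrictAntiOn hfun (Set.Ici acrit) := by
  apply strictAntiOn_of_deriv_neg (convex_Ici _) hfun_cont.continuousOn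
  intro t ht
  rw [interior_Ici] at ht
  rw [(hasDerivAt_hfun t).deriv]
  apply mul_neg_of_pos_of_neg (npdf_pos t)
  have ht' : acrit < t := ht
  have h1 : acrit ^ 2 < t ^ 2 := by nlinarith [acrit_pos, ht']
  rw [acrit_sq] at h1
  have hπ := Real.pi_pos
  nlinarith [pi_mul_two_div]

lemma gfun_pos_small : ∀ t ∈ Set.Ioc 0 acrit, 0 < gfun t := by
  have hmono : StrictMonoOn gfun (Set.Icc 0 acrit) := by
    apply strictMonoOn_of_deriv_pos (convex_Icc _ _) gfun_cont.continuousOn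
    intro t ht
    rw [interior_Icc] at ht
    rw [(hasDerivAt_gfun t).deriv]
    exact mul_pos (npdf_pos t) (hfun_pos t ⟨ht.1, ht.2.le⟩)
  intro t ht
  have := hmono (Set.left_mem_Icc.2 acrit_pos.le) ⟨ht.1.le, ht.2⟩ ht.1
  rwa [gfun_zero] at this

lemma gfun_pos {t : ℝ} (ht : 0 < t) : 0 < gfun t := by
  rcases le_or_gt t acrit with h | h
  · exact gfun_pos_small t ⟨ht, h⟩
  · by_contra hle
    push_neg at hle
    have hga : 0 < gfun acrit := gfun_pos_small acrit ⟨acrit_pos, le_refl _⟩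
    obtain ⟨c, hc, hderiv⟩ := exists_hasDerivAt_eq_slope gfun (fun u => npdf u * hfun u) h
      gfun_cont.continuousOn (fun u _ => hasDerivAt_gfun u)
    have hslope : npdf c * hfun c < 0 := by
      rw [hderiv]
      apply div_neg_of_neg_of_pos (by linarith) (by linarith)
    have hfc : hfun c < 0 := by nlinarith [npdf_pos c]
    have hanti : StrictAntiOn gfun (Set.Ici c) := by
      apply strictAntiOn_of_deriv_neg (convex_Ici _) gfun_cont.continuousOn
      intro u hu
      rw [interior_Ici] at hu
      rw [(hasDerivAt_gfun u).deriv]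
      have hfu : hfun u < hfun c := hfun_anti hc.1.le (hc.1.trans hu).le hu
      exact mul_neg_of_pos_of_neg (npdf_pos u) (by linarith)
    have h1 : gfun (t + 1) < gfun t :=
      hanti (Set.mem_Ici.2 hc.2.le) (Set.mem_Ici.2 (by linarith [hc.2])) (lt_add_one t)
    have key : ∀ u ≥ t + 1, gfun u ≤ gfun (t + 1) := by
      intro u hu
      rcases eq_or_lt_of_le hu with he | hlt
      · rw [← he]
      · exact (hanti (Set.mem_Ici.2 (by linarith [hc.2])) (Set.mem_Ici.2 (by linarith [hc.2])) hlt).le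
    have hlim : (0:ℝ) ≤ gfun (t + 1) :=
      le_of_tendsto tendsto_gfun_atTop (Filter.eventually_atTop.2 ⟨t + 1, key⟩)
    linarith

lemma gfun_pos_of_ne {t : ℝ} (ht : t ≠ 0) : 0 < gfun t := by
  rcases lt_or_gt_of_ne ht with h | h
  · have : 0 < -t := by linarith
    have := gfun_pos this
    rwa [gfun_even] at this
  · exact gfun_pos h

lemma gfun_eq_zero_iff (t : ℝ) : gfun t = 0 ↔ t = 0 := by
  constructor
  · intro h
    by_contra ht
    exact (gfun_pos_of_ne ht).ne' h
  · rintro rfl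
    exact gfun_zero

/-- With `φ` the standard normal density and `Φ` its CDF,
`φ(t)²/(Φ(t)(1-Φ(t))) ≤ 2/π` for all `t ∈ ℝ`, with equality iff `t = 0`. -/
theorem stmt13 (φstd : ℝ → ℝ)
    (hφstd : φstd = fun t => (Real.sqrt (2 * Real.pi))⁻¹ * Real.exp (-t ^ 2 / 2))
    (Φ : ℝ → ℝ) (hΦ : Φ = fun t => ∫ s in Set.Iic t, φstd s) :
    (∀ t : ℝ, (φstd t) ^ 2 / (Φ t * (1 - Φ t)) ≤ 2 / Real.pi) ∧
    (∀ t : ℝ, (φstd t) ^ 2 / (Φ t * (1 - Φ t)) = 2 / Real.pi ↔ t = 0) := by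
  have hφ : φstd = npdf := hφstd
  subst hφ
  have hΦ' : Φ = ncdf := hΦ
  subst hΦ'
  have hπ := Real.pi_pos
  have hD : ∀ t : ℝ, 0 < ncdf t * (1 - ncdf t) := fun t =>
    mul_pos (ncdf_pos t) (by linarith [ncdf_lt_one t])
  constructor
  · intro t
    rw [div_le_div_iff₀ (hD t) hπ]
    have hg : 0 ≤ gfun t := by
      rcases eq_or_ne t 0 with rfl | ht
      · exact gfun_zero.ge
      · exact (gfun_pos_of_ne ht).le
    rw [gfun] at hg
    linarith
  · intro t
    rw [div_eq_div_iff (hD t).ne' hπ.ne', ← gfun_eq_zero_iff t, gfun]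
    constructor <;> intro h <;> linarith
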